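/- arXiv:2404.13782 — 6 statements merged into one kernel-verified Lean document; each statement's English description precedes it below -/
import Mathlib

section
/- Let A₀, B, C, A₁ be preorders. Let (ě, ê) be a Galois connection from A₀ to B that is a reflection (ě (ê b) = b for all b : B), let (m̌, m̂) be a Galois connection from C to A₁ that is a coreflection (m̂ (m̌ c) = c for all c : C), and let (ř, r̂) : A₀ ⇄ C and (š, ŝ) : B ⇄ A₁ be Galois connections such that the square commutes: š (ě a) = m̌ (ř a) for all a : A₀ and ê (ŝ x) = r̂ (m̂ x) for all x : A₁. Then there exists a Galois connection (ď, d̂) from B to C such that ď (ě a) = ř a and ê (d̂ c) = r̂ c and m̌ (ď b) = š b and d̂ (m̂ x) = ŝ x (for all a : A₀, c : C, b : B, x : A₁); moreover it is unique: any Galois connection (b̌, b̂) from B to C satisfying these four equations has b̌ = ď and b̂ = d̂. -/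
/-- Diagonalization lemma for Galois connections: given a commutative square
`e ∘ s = r ∘ m` of Galois connections with `e` a reflection and `m` a coreflection,
there is a unique Galois connection `d : B ⇄ C` diagonalizing the square. -/
theorem galois_diagonalization
    {A0 B C A1 : Type*} [Preorder A0] [Preorder B] [Preorder C] [Preorder A1]
    {eL : A0 → B} {eU : B → A0} (ge : GaloisConnection eL eU)
    (he : ∀ b : B, eL (eU b) = b)
    {mL : C → A1} {mU : A1 → C} (gm : GaloisConnection mL mU)
    (hm : ∀ c : C, mU (mL c) = c)
    {rL : A0 → C} {rU : C → A0} (gr : GaloisConnection rL rU)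
    {sL : B → A1} {sU : A1 → B} (gs : GaloisConnection sL sU)
    (hsq1 : ∀ a : A0, sL (eL a) = mL (rL a))
    (hsq2 : ∀ x : A1, eU (sU x) = rU (mU x)) :
    ∃ (dL : B → C) (dU : C → B),
      GaloisConnection dL dU ∧
      (∀ a : A0, dL (eL a) = rL a) ∧
      (∀ c : C, eU (dU c) = rU c) ∧
      (∀ b : B, mL (dL b) = sL b) ∧
      (∀ x : A1, dU (mU x) = sU x) ∧
      ∀ (bL : B → C) (bU : C → B), GaloisConnection bL bU →
        (∀ a : A0, bL (eL a) = rL a) →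
        (∀ c : C, eU (bU c) = rU c) →
        (∀ b : B, mL (bL b) = sL b) →
        (∀ x : A1, bU (mU x) = sU x) →
        bL = dL ∧ bU = dU := by
  -- key identities
  have k1 : ∀ b : B, sL b = mL (rL (eU b)) := by
    intro b; conv_lhs => rw [← he b]
    rw [hsq1]
  have k2 : ∀ c : C, rU c = eU (sU (mL c)) := by
    intro c; conv_lhs => rw [← hm c]
    rw [← hsq2]
  have k3 : ∀ c : C, eU (eL (rU c)) = rU c := by
    intro c; rw [k2 c, he]
  have k4 : ∀ b : B, mU (sL b) = rL (eU b) := by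
    intro b; rw [k1, hm]
  refine ⟨fun b => mU (sL b), fun c => eL (rU c), ?_, ?_, ?_, ?_, ?_, ?_⟩
  · intro b c
    dsimp only
    rw [k4]
    constructor
    · intro h
      have := ge.monotone_l ((gr.le_iff_le).mp h)
      rwa [he] at this
    · intro h
      rw [gr.le_iff_le, ← k3 c]
      exact ge.monotone_u h
  · intro a
    dsimp only
    rw [hsq1, hm]
  · intro c; exact k3 c
  · intro b
    dsimp only
    rw [k1 b, hm, ← k1]
  · intro x
    dsimp only
    rw [← hsq2, he]
  · intro bL bU gb h1 h2 h3 h4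
    constructor
    · funext b
      rw [k4 b, ← h1 (eU b), he]
    · funext c
      rw [← hm c, h4, k2, he, hm]
end

section
/- Let A and B be partial orders and let (l, u) be a Galois connection from A to B. Suppose (e₁, ê₁) : A ⇄ C₁ is a reflection and (m₁, m̂₁) : C₁ ⇄ B is a coreflection with l = m₁ ∘ e₁ and u = ê₁ ∘ m̂₁, where C₁ is a partial order; and suppose likewise (e₂, ê₂) : A ⇄ C₂ is a reflection and (m₂, m̂₂) : C₂ ⇄ B is a coreflection with l = m₂ ∘ e₂ and u = ê₂ ∘ m̂₂, where C₂ is a partial order. Then there is a unique order isomorphism h : C₁ ≃o C₂ such that h (e₁ a) = e₂ a for all a : A and m₂ (h c) = m₁ c for all c : C₁. -/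
/-- Uniqueness of reflection–coreflection factorizations of a Galois connection between
partial orders: any two factorizations of `(l, u)` into a reflection followed by a
coreflection are related by a unique order isomorphism of their middle objects,
compatible with both factorizations. -/
theorem factorization_uniqueness
    {A B C₁ C₂ : Type*} [PartialOrder A] [PartialOrder B]
    [PartialOrder C₁] [PartialOrder C₂]
    {l : A → B} {u : B → A} (gc : GaloisConnection l u)
    {e₁ : A → C₁} {e₁u : C₁ → A} (ge₁ : GaloisConnection e₁ e₁u)
    (hrefl₁ : ∀ c : C₁, e₁ (e₁u c) = c)
    {m₁ : C₁ → B} {m₁u : B → C₁} (gm₁ : GaloisConnection m₁ m₁u)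
    (hcorefl₁ : ∀ c : C₁, m₁u (m₁ c) = c)
    (hl₁ : ∀ a : A, m₁ (e₁ a) = l a) (hu₁ : ∀ b : B, e₁u (m₁u b) = u b)
    {e₂ : A → C₂} {e₂u : C₂ → A} (ge₂ : GaloisConnection e₂ e₂u)
    (hrefl₂ : ∀ c : C₂, e₂ (e₂u c) = c)
    {m₂ : C₂ → B} {m₂u : B → C₂} (gm₂ : GaloisConnection m₂ m₂u)
    (hcorefl₂ : ∀ c : C₂, m₂u (m₂ c) = c)
    (hl₂ : ∀ a : A, m₂ (e₂ a) = l a) (hu₂ : ∀ b : B, e₂u (m₂u b) = u b) :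
    ∃! h : C₁ ≃o C₂, (∀ a : A, h (e₁ a) = e₂ a) ∧ (∀ c : C₁, m₂ (h c) = m₁ c) := by

  -- key: the two descriptions of the comparison map agree
  have key12 : ∀ c : C₁, e₂ (e₁u c) = m₂u (m₁ c) := fun c =>
    calc e₂ (e₁u c) = e₂ (e₁u (m₁u (m₁ c))) := by rw [hcorefl₁]
      _ = e₂ (u (m₁ c)) := by rw [hu₁]
      _ = e₂ (e₂u (m₂u (m₁ c))) := by rw [hu₂]
      _ = m₂u (m₁ c) := hrefl₂ _
  have key21 : ∀ c : C₂, e₁ (e₂u c) = m₁u (m₂ c) := fun c =>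
    calc e₁ (e₂u c) = e₁ (e₂u (m₂u (m₂ c))) := by rw [hcorefl₂]
      _ = e₁ (u (m₂ c)) := by rw [hu₂]
      _ = e₁ (e₁u (m₁u (m₂ c))) := by rw [hu₁]
      _ = m₁u (m₂ c) := hrefl₁ _
  have hm : ∀ c : C₁, m₂ (e₂ (e₁u c)) = m₁ c := fun c => by
    rw [hl₂, ← hl₁, hrefl₁]
  have hm' : ∀ c : C₂, m₁ (e₁ (e₂u c)) = m₂ c := fun c => by
    rw [hl₁, ← hl₂, hrefl₂]
  have left_inv : ∀ c : C₁, e₁ (e₂u (e₂ (e₁u c))) = c := fun c => by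
    rw [key21, hm, hcorefl₁]
  have right_inv : ∀ c : C₂, e₂ (e₁u (e₁ (e₂u c))) = c := fun c => by
    rw [key12, hm', hcorefl₂]
  have mono12 : Monotone fun c : C₁ => e₂ (e₁u c) :=
    ge₂.monotone_l.comp ge₁.monotone_u
  have mono21 : Monotone fun c : C₂ => e₁ (e₂u c) :=
    ge₁.monotone_l.comp ge₂.monotone_u
  refine ⟨⟨⟨fun c => e₂ (e₁u c), fun c => e₁ (e₂u c), left_inv, right_inv⟩, ?_⟩,
    ⟨?_, ?_⟩, ?_⟩
  · intro c c'
    constructor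
    · intro h
      have := mono21 h
      simpa [left_inv] using this
    · intro h
      exact mono12 h
  · intro a
    show e₂ (e₁u (e₁ a)) = e₂ a
    rw [key12, hl₁, ← hl₂, hcorefl₂]
  · intro c
    exact hm c
  · rintro h ⟨h1, h2⟩
    ext c
    show h c = e₂ (e₁u c)
    rw [← hrefl₁ c, h1, hrefl₁]
end

section
/- Let A₀, B, C, A₁ be preorders. Let (ě, ê) be a Galois connection from A₀ to B that is a pseudo-reflection ((fun b => ě (ê b)) ≡ id on B), let (m̌, m̂) be a Galois connection from C to A₁ that is a pseudo-coreflection ((fun c => m̂ (m̌ c)) ≡ id on C), and let (ř, r̂) : A₀ ⇄ C and (š, ŝ) : B ⇄ A₁ be Galois connections such that the square pseudo-commutes: (fun a => š (ě a)) ≡ (fun a => m̌ (ř a)) and (fun x => ê (ŝ x)) ≡ (fun x => r̂ (m̂ x)). Then there exists a Galois connection (ď, d̂) from B to C with (fun a => ď (ě a)) ≡ ř, (fun c => ê (d̂ c)) ≡ r̂, (fun b => m̌ (ď b)) ≡ š, and (fun x => d̂ (m̂ x)) ≡ ŝ; moreover it is unique up to equivalence: any Galois connection (b̌, b̂) from B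 to C satisfying these four equivalences has b̌ ≡ ď and b̂ ≡ d̂. -/
/-- Pointwise equivalence of two functions into a preorder. -/
def PtEquiv {X P : Type*} [Preorder P] (f g : X → P) : Prop :=
  ∀ x : X, f x ≤ g x ∧ g x ≤ f x

/-- Pseudo-diagonalization lemma for Galois connections: given a pseudo-commutative
square `e ∘ s ≡ r ∘ m` of Galois connections with `e` a pseudo-reflection and `m` a
pseudo-coreflection, there is a Galois connection `d : B ⇄ C`, unique up to equivalence,
pseudo-diagonalizing the square. -/
theorem galois_pseudo_diagonalization
    {A0 B C A1 : Type*} [Preorder A0] [Preorder B] [Preorder C] [Preorder A1]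
    {eL : A0 → B} {eU : B → A0} (ge : GaloisConnection eL eU)
    (he : PtEquiv (fun b : B => eL (eU b)) id)
    {mL : C → A1} {mU : A1 → C} (gm : GaloisConnection mL mU)
    (hm : PtEquiv (fun c : C => mU (mL c)) id)
    {rL : A0 → C} {rU : C → A0} (gr : GaloisConnection rL rU)
    {sL : B → A1} {sU : A1 → B} (gs : GaloisConnection sL sU)
    (hsq1 : PtEquiv (fun a : A0 => sL (eL a)) (fun a : A0 => mL (rL a)))
    (hsq2 : PtEquiv (fun x : A1 => eU (sU x)) (fun x : A1 => rU (mU x))) :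
    ∃ (dL : B → C) (dU : C → B),
      GaloisConnection dL dU ∧
      PtEquiv (fun a : A0 => dL (eL a)) rL ∧
      PtEquiv (fun c : C => eU (dU c)) rU ∧
      PtEquiv (fun b : B => mL (dL b)) sL ∧
      PtEquiv (fun x : A1 => dU (mU x)) sU ∧
      ∀ (bL : B → C) (bU : C → B), GaloisConnection bL bU →
        PtEquiv (fun a : A0 => bL (eL a)) rL →
        PtEquiv (fun c : C => eU (bU c)) rU →
        PtEquiv (fun b : B => mL (bL b)) sL →
        PtEquiv (fun x : A1 => bU (mU x)) sU →
        PtEquiv bL dL ∧ PtEquiv bU dU := by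
  refine ⟨fun b => rL (eU b), fun c => sU (mL c), ?_, ?_, ?_, ?_, ?_, ?_⟩
  · intro b c
    constructor
    · intro h
      have h1 : eU b ≤ rU c := (gr (eU b) c).mp h
      have h2 : rU c ≤ eU (sU (mL c)) :=
        le_trans (gr.monotone_u (hm c).2) (hsq2 (mL c)).2
      have h3 : b ≤ eL (eU b) := (he b).2
      exact le_trans h3 (le_trans (ge.monotone_l (le_trans h1 h2)) (he (sU (mL c))).1)
    · intro h
      have h1 : eU b ≤ rU c :=
        le_trans (ge.monotone_u h)
          (le_trans (hsq2 (mL c)).1 (gr.monotone_u (hm c).1))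
      exact (gr (eU b) c).mpr h1
  · intro a
    refine ⟨?_, gr.monotone_l (ge.le_u_l a)⟩
    calc rL (eU (eL a)) ≤ mU (mL (rL (eU (eL a)))) := (hm _).2
      _ ≤ mU (sL (eL (eU (eL a)))) := gm.monotone_u (hsq1 _).2
      _ ≤ mU (sL (eL a)) := gm.monotone_u (gs.monotone_l (he (eL a)).1)
      _ ≤ mU (mL (rL a)) := gm.monotone_u (hsq1 a).1
      _ ≤ rL a := (hm _).1
  · intro c
    exact ⟨le_trans (hsq2 (mL c)).1 (gr.monotone_u (hm c).1),
      le_trans (gr.monotone_u (hm c).2) (hsq2 (mL c)).2⟩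
  · intro b
    exact ⟨le_trans (hsq1 (eU b)).2 (gs.monotone_l (he b).1),
      le_trans (gs.monotone_l (he b).2) (hsq1 (eU b)).1⟩
  · intro x
    refine ⟨gs.monotone_u (gm.l_u_le x), ?_⟩
    calc sU x ≤ eL (eU (sU x)) := (he _).2
      _ ≤ eL (rU (mU x)) := ge.monotone_l (hsq2 x).1
      _ ≤ eL (rU (mU (mL (mU x)))) := ge.monotone_l (gr.monotone_u (hm (mU x)).2)
      _ ≤ eL (eU (sU (mL (mU x)))) := ge.monotone_l (hsq2 (mL (mU x))).2
      _ ≤ sU (mL (mU x)) := (he _).1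
  · intro bL bU gb h1 h2 h3 h4
    constructor
    · intro b
      constructor
      · calc bL b ≤ mU (mL (bL b)) := (hm _).2
          _ ≤ mU (sL b) := gm.monotone_u (h3 b).1
          _ ≤ mU (sL (eL (eU b))) := gm.monotone_u (gs.monotone_l (he b).2)
          _ ≤ mU (mL (rL (eU b))) := gm.monotone_u (hsq1 (eU b)).1
          _ ≤ rL (eU b) := (hm _).1
      · calc rL (eU b) ≤ mU (mL (rL (eU b))) := (hm _).2
          _ ≤ mU (sL (eL (eU b))) := gm.monotone_u (hsq1 (eU b)).2
          _ ≤ mU (sL b) := gm.monotone_u (gs.monotone_l (he b).1)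
          _ ≤ mU (mL (bL b)) := gm.monotone_u (h3 b).2
          _ ≤ bL b := (hm _).1
    · intro c
      constructor
      · calc bU c ≤ eL (eU (bU c)) := (he _).2
          _ ≤ eL (rU c) := ge.monotone_l (h2 c).1
          _ ≤ eL (rU (mU (mL c))) := ge.monotone_l (gr.monotone_u (hm c).2)
          _ ≤ eL (eU (sU (mL c))) := ge.monotone_l (hsq2 (mL c)).2
          _ ≤ sU (mL c) := (he _).1
      · calc sU (mL c) ≤ eL (eU (sU (mL c))) := (he _).2
          _ ≤ eL (rU (mU (mL c))) := ge.monotone_l (hsq2 (mL c)).1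
          _ ≤ eL (rU c) := ge.monotone_l (gr.monotone_u (hm c).1)
          _ ≤ eL (eU (bU c)) := ge.monotone_l (h2 c).2
          _ ≤ bU c := (he _).1
end

section
/- Let A and B be partial orders and let (l, u) be a Galois connection from A to B. Let D := {(a, b) : A × B | l a = b ∧ u b = a} be the axis, with the componentwise order, and let π₀ : D → A and π₁ : D → B be the two projections. Then: (i) the map ξ₀ : A → D, a ↦ (u (l a), l a), is well-defined, the pair (ξ₀, π₀) is a Galois connection from A to D, and it is a reflection, i.e. ξ₀ (π₀ d) = d for all d ∈ D; (ii) the map ξ₁ : B → D, b ↦ (u b, l (u b)), is well-defined, the pair (π₁, ξ₁) is a Galois connection from D to B, and it is a coreflection, i.e. ξ₁ (π₁ d) = d for all d ∈ D; (iii) the composite recovers the original connection: π₁ (ξ₀ a) = l a for all a : A and π₀ (ξ₁ b) = u b for all b : B. -/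
/-- The axis of a Galois connection `(l, u) : A ⇄ B`: the set
`{(a, b) : A × B | l a = b ∧ u b = a}` with the componentwise order. -/
abbrev Axis {A B : Type*} (l : A → B) (u : B → A) : Type _ :=
  {p : A × B // l p.1 = p.2 ∧ u p.2 = p.1}

/-- The source embedding `ξ₀ : A → D`, `a ↦ (u (l a), l a)`; well-defined since
`l (u (l a)) = l a`. -/
def xi0 {A B : Type*} [PartialOrder A] [PartialOrder B]
    {l : A → B} {u : B → A} (gc : GaloisConnection l u) (a : A) : Axis l u :=
  ⟨(u (l a), l a), gc.l_u_l_eq_l a, rfl⟩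

/-- The target embedding `ξ₁ : B → D`, `b ↦ (u b, l (u b))`; well-defined since
`u (l (u b)) = u b`. -/
def xi1 {A B : Type*} [PartialOrder A] [PartialOrder B]
    {l : A → B} {u : B → A} (gc : GaloisConnection l u) (b : B) : Axis l u :=
  ⟨(u b, l (u b)), rfl, gc.u_l_u_eq_u b⟩

/-- The polar factorization through the axis, for a Galois connection `(l, u)` between
partial orders:
(i) `(ξ₀, π₀)` is a Galois connection from `A` to the axis `D` and is a reflection
(`ξ₀ (π₀ d) = d`);
(ii) `(π₁, ξ₁)` is a Galois connection from `D` to `B` and is a coreflection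
(`ξ₁ (π₁ d) = d`);
(iii) the composite recovers the original connection: `π₁ (ξ₀ a) = l a` and
`π₀ (ξ₁ b) = u b`. -/
theorem polar_factorization_axis {A B : Type*} [PartialOrder A] [PartialOrder B]
    {l : A → B} {u : B → A} (gc : GaloisConnection l u) :
    (GaloisConnection (xi0 gc) (fun d : Axis l u => d.val.1) ∧
      ∀ d : Axis l u, xi0 gc d.val.1 = d) ∧
    (GaloisConnection (fun d : Axis l u => d.val.2) (xi1 gc) ∧
      ∀ d : Axis l u, xi1 gc d.val.2 = d) ∧
    ((∀ a : A, (xi0 gc a).val.2 = l a) ∧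
      ∀ b : B, (xi1 gc b).val.1 = u b) := by
  refine ⟨⟨?_, ?_⟩, ⟨?_, ?_⟩, ⟨fun a => rfl, fun b => rfl⟩⟩
  · intro a d
    constructor
    · intro h
      exact le_trans (gc.le_u_l a) h.1
    · intro h
      have h2 : l a ≤ d.val.2 := d.prop.1 ▸ gc.monotone_l h
      exact ⟨d.prop.2 ▸ gc.monotone_u h2, h2⟩
  · intro d
    apply Subtype.ext
    apply Prod.ext
    · exact (congrArg u d.prop.1).trans d.prop.2
    · exact d.prop.1
  · intro d b
    constructor
    · intro h
      have h1 : d.val.1 ≤ u b := d.prop.2 ▸ gc.monotone_u h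
      exact ⟨h1, d.prop.1 ▸ gc.monotone_l h1⟩
    · intro h
      exact le_trans h.2 (gc.l_u_le b)
  · intro d
    apply Subtype.ext
    apply Prod.ext
    · exact d.prop.2
    · exact (congrArg l d.prop.2).trans d.prop.1
end

section
/- Let A₀, A₁, B₀, B₁ be partial orders, and let (ǧ, ĝ) : A₀ ⇄ A₁, (ȟ, ĥ) : B₀ ⇄ B₁, (f̌₀, f̂₀) : A₀ ⇄ B₀, (f̌₁, f̂₁) : A₁ ⇄ B₁ be Galois connections satisfying the commutativity conditions f̌₁ (ǧ a) = ȟ (f̌₀ a) for all a : A₀ and f̂₀ (ĥ b) = ĝ (f̂₁ b) for all b : B₁. Let D_g and D_h denote the axes of (ǧ, ĝ) and (ȟ, ĥ) respectively. Then the map ◇̌ : D_g → D_h, (a, b) ↦ (ĥ (ȟ (f̌₀ a)), f̌₁ b), and the map ◇̂ : D_h → D_g, (a', b') ↦ (f̂₀ a', ǧ (ĝ (f̂₁ b'))), are both well-defined (their values lie in the respective axes), and the pair (◇̌, ◇̂) is a Galois connection from D_g to D_h (the axis adjunction of the square). -/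
/-- Given a commutative square of Galois connections `g : A₀ ⇄ A₁`, `h : B₀ ⇄ B₁`,
`f₀ : A₀ ⇄ B₀`, `f₁ : A₁ ⇄ B₁` (with `f̌₁ ∘ ǧ = ȟ ∘ f̌₀` and `f̂₀ ∘ ĥ = ĝ ∘ f̂₁`),
the maps `(a, b) ↦ (ĥ (ȟ (f̌₀ a)), f̌₁ b)` and `(a', b') ↦ (f̂₀ a', ǧ (ĝ (f̂₁ b')))`
are well-defined maps between the axes (their values lie in the respective axes), and
they form a Galois connection: the axis adjunction of the square. -/
theorem axis_adjunction
    {A0 A1 B0 B1 : Type*} [PartialOrder A0] [PartialOrder A1]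
    [PartialOrder B0] [PartialOrder B1]
    {gL : A0 → A1} {gU : A1 → A0} (gg : GaloisConnection gL gU)
    {hL : B0 → B1} {hU : B1 → B0} (gh : GaloisConnection hL hU)
    {f0L : A0 → B0} {f0U : B0 → A0} (gf0 : GaloisConnection f0L f0U)
    {f1L : A1 → B1} {f1U : B1 → A1} (gf1 : GaloisConnection f1L f1U)
    (hcomm1 : ∀ a : A0, f1L (gL a) = hL (f0L a))
    (hcomm2 : ∀ b : B1, f0U (hU b) = gU (f1U b)) :
    ∃ (dL : Axis gL gU → Axis hL hU) (dU : Axis hL hU → Axis gL gU),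
      (∀ d : Axis gL gU, (dL d).val = (hU (hL (f0L d.val.1)), f1L d.val.2)) ∧
      (∀ d : Axis hL hU, (dU d).val = (f0U d.val.1, gL (gU (f1U d.val.2)))) ∧
      GaloisConnection dL dU := by
  refine ⟨fun d => ⟨(hU (hL (f0L d.val.1)), f1L d.val.2), ?_, ?_⟩,
         fun d => ⟨(f0U d.val.1, gL (gU (f1U d.val.2))), ?_, ?_⟩,
         fun _ => rfl, fun _ => rfl, ?_⟩
  · obtain ⟨⟨a, b⟩, h1, h2⟩ := d
    replace h1 : gL a = b := h1
    show hL (hU (hL (f0L a))) = f1L b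
    rw [gh.l_u_l_eq_l, ← hcomm1, h1]
  · obtain ⟨⟨a, b⟩, h1, h2⟩ := d
    replace h1 : gL a = b := h1
    show hU (f1L b) = hU (hL (f0L a))
    rw [← h1, hcomm1]
  · obtain ⟨⟨a, b⟩, h1, h2⟩ := d
    replace h2 : hU b = a := h2
    show gL (f0U a) = gL (gU (f1U b))
    rw [← h2, hcomm2]
  · obtain ⟨⟨a, b⟩, h1, h2⟩ := d
    show gU (gL (gU (f1U b))) = f0U a
    replace h2 : hU b = a := h2
    rw [gg.u_l_u_eq_u, ← hcomm2, h2]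
  · rintro ⟨⟨a, b⟩, h1, h2⟩ ⟨⟨a', b'⟩, h1', h2'⟩
    replace h1 : gL a = b := h1
    replace h2' : hU b' = a' := h2'
    show (hU (hL (f0L a)), f1L b) ≤ (a', b') ↔ (a, b) ≤ (f0U a', gL (gU (f1U b')))
    simp only [Prod.mk_le_mk]
    constructor
    · rintro ⟨-, hb⟩
      replace h2 : gU b = a := h2
      have ha : a ≤ f0U a' := by
        rw [← h2', hcomm2, ← gg.le_iff_le, h1, ← gf1.le_iff_le]
        exact hb
      refine ⟨ha, ?_⟩
      calc b = gL (gU b) := by rw [h2, h1]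
        _ ≤ gL (gU (f1U b')) := gg.monotone_l (gg.monotone_u (gf1.le_iff_le.mp hb))
    · rintro ⟨ha, -⟩
      have hb : f1L b ≤ b' := by
        rw [gf1.le_iff_le, ← h1, gg.le_iff_le, ← hcomm2, h2']
        exact ha
      refine ⟨?_, hb⟩
      rw [← h2']
      apply gh.monotone_u
      rw [← hcomm1, h1]
      exact hb
end

section
/- Let A₀, A₁, B₀, B₁ be partial orders, and let (ǧ, ĝ) : A₀ ⇄ A₁, (ȟ, ĥ) : B₀ ⇄ B₁, (f̌₀, f̂₀) : A₀ ⇄ B₀, (f̌₁, f̂₁) : A₁ ⇄ B₁ be Galois connections satisfying f̌₁ (ǧ a) = ȟ (f̌₀ a) for all a : A₀ and f̂₀ (ĥ b) = ĝ (f̂₁ b) for all b : B₁. Let D_g, D_h be the axes of (ǧ, ĝ), (ȟ, ĥ), with projections π₀, π₁ and embeddings ξ₀ᵍ a = (ĝ (ǧ a), ǧ a), ξ₁ᵍ b = (ĝ b, ǧ (ĝ b)) (and analogously ξ₀ʰ, ξ₁ʰ for h). Let ◇̌ : D_g → D_h, (a, b) ↦ (ĥ (ȟ (f̌₀ a)),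 f̌₁ b), and ◇̂ : D_h → D_g, (a', b') ↦ (f̂₀ a', ǧ (ĝ (f̂₁ b'))), be the axis adjunction of the square. Then the following four identities hold: (i) ◇̌ (ξ₀ᵍ a) = ξ₀ʰ (f̌₀ a) for all a : A₀; (ii) π₀ (◇̂ d') = f̂₀ (π₀ d') for all d' ∈ D_h; (iii) π₁ (◇̌ d) = f̌₁ (π₁ d) for all d ∈ D_g; (iv) ◇̂ (ξ₁ʰ b') = ξ₁ᵍ (f̂₁ b') for all b' : B₁. (That is, the extent reflections satisfy ref_g ∘ ◇ = f₀ ∘ ref_h and the intent coreflections satisfy ◇ ∘ ref_h^∝ = ref_g^∝ ∘ f₁.) -/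
/-- Given a commutative square of Galois connections `g : A₀ ⇄ A₁`, `h : B₀ ⇄ B₁`,
`f₀ : A₀ ⇄ B₀`, `f₁ : A₁ ⇄ B₁`, and the axis adjunction `(◇̌, ◇̂)` between the axes —
`◇̌ (a, b) = (ĥ (ȟ (f̌₀ a)), f̌₁ b)` and `◇̂ (a', b') = (f̂₀ a', ǧ (ĝ (f̂₁ b')))` —
the following hold:
(i) `◇̌ (ξ₀ᵍ a) = ξ₀ʰ (f̌₀ a)`;
(ii) `π₀ (◇̂ d') = f̂₀ (π₀ d')`;
(iii) `π₁ (◇̌ d) = f̌₁ (π₁ d)`;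
(iv) `◇̂ (ξ₁ʰ b') = ξ₁ᵍ (f̂₁ b')`.
That is, `ref_g ∘ ◇ = f₀ ∘ ref_h` and `◇ ∘ ref_h^∝ = ref_g^∝ ∘ f₁`. -/
theorem axis_adjunction_identities
    {A0 A1 B0 B1 : Type*} [PartialOrder A0] [PartialOrder A1]
    [PartialOrder B0] [PartialOrder B1]
    {gL : A0 → A1} {gU : A1 → A0} (gg : GaloisConnection gL gU)
    {hL : B0 → B1} {hU : B1 → B0} (gh : GaloisConnection hL hU)
    {f0L : A0 → B0} {f0U : B0 → A0} (gf0 : GaloisConnection f0L f0U)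
    {f1L : A1 → B1} {f1U : B1 → A1} (gf1 : GaloisConnection f1L f1U)
    (hcomm1 : ∀ a : A0, f1L (gL a) = hL (f0L a))
    (hcomm2 : ∀ b : B1, f0U (hU b) = gU (f1U b))
    (dL : Axis gL gU → Axis hL hU) (dU : Axis hL hU → Axis gL gU)
    (hdL : ∀ d : Axis gL gU, (dL d).val = (hU (hL (f0L d.val.1)), f1L d.val.2))
    (hdU : ∀ d : Axis hL hU, (dU d).val = (f0U d.val.1, gL (gU (f1U d.val.2)))) :
    (∀ a : A0, dL (xi0 gg a) = xi0 gh (f0L a)) ∧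
    (∀ d : Axis hL hU, (dU d).val.1 = f0U d.val.1) ∧
    (∀ d : Axis gL gU, (dL d).val.2 = f1L d.val.2) ∧
    (∀ b : B1, dU (xi1 gh b) = xi1 gg (f1U b)) := by
  refine ⟨fun a => ?_, fun d => by rw [hdU], fun d => by rw [hdL], fun b => ?_⟩
  · apply Subtype.ext
    have hax := (dL (xi0 gg a)).prop
    have h2 : (dL (xi0 gg a)).val.2 = hL (f0L a) := by
      rw [hdL]; exact (hcomm1 a).symm ▸ rfl
    have h1 : (dL (xi0 gg a)).val.1 = hU (hL (f0L a)) := by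
      rw [← hax.2, h2]
    exact Prod.ext h1 h2
  · apply Subtype.ext
    have hax := (dU (xi1 gh b)).prop
    have h1 : (dU (xi1 gh b)).val.1 = gU (f1U b) := by
      rw [hdU]; exact hcomm2 b
    have h2 : (dU (xi1 gh b)).val.2 = gL (gU (f1U b)) := by
      rw [← hax.1, h1]
    exact Prod.ext h1 h2
end
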